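/- (Theorem 1: A perturbed distribution.) Fix x ∈ ℝ^d, let p : ℝ^d → ℝ be strictly positive with log∘p differentiable at x, let δ ∈ ℝ^{d×m} be such that δWᵀ is symmetric, and let C ∈ ℝ be arbitrary. Then the perturbed density p̂_δ(x) = e^{−I(x,δ)}·p(x) satisfies the loss equality L(x; θ+δ, p) = L(x; θ, p̂_δ); that is, ‖s_{θ+δ}(x) − ∇log p(x)‖₂² = ‖s_θ(x) − ∇log p̂_δ(x)‖₂². -/

import Mathlib

open Matrix
open scoped RealInnerProductSpace

/-- The random-feature score model with linear activation:
`s_θ(x) = (1/m) · θ (Wᵀ x + Uᵀ e)`. -/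
noncomputable def score (d m de : ℕ) (W : Matrix (Fin d) (Fin m) ℝ)
    (U : Matrix (Fin de) (Fin m) ℝ) (e : Fin de → ℝ)
    (θ : Matrix (Fin d) (Fin m) ℝ) (x : EuclideanSpace ℝ (Fin d)) :
    EuclideanSpace ℝ (Fin d) :=
  (m : ℝ)⁻¹ • ((WithLp.equiv 2 _).symm (θ.mulVec (Wᵀ.mulVec x + Uᵀ.mulVec e)) :
    EuclideanSpace ℝ (Fin d))

/-- The tilting exponent `I(x, δ) = (1/(2m))·xᵀ(δWᵀ)x + (1/m)·xᵀ(δUᵀe) + C`. -/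
noncomputable def tiltExp (d m de : ℕ) (W : Matrix (Fin d) (Fin m) ℝ)
    (U : Matrix (Fin de) (Fin m) ℝ) (e : Fin de → ℝ)
    (δ : Matrix (Fin d) (Fin m) ℝ) (C : ℝ) (x : EuclideanSpace ℝ (Fin d)) : ℝ :=
  (2 * (m : ℝ))⁻¹ * ⟪x, ((WithLp.equiv 2 _).symm ((δ * Wᵀ).mulVec x) :
      EuclideanSpace ℝ (Fin d))⟫
    + (m : ℝ)⁻¹ * ⟪x, ((WithLp.equiv 2 _).symm (δ.mulVec (Uᵀ.mulVec e)) :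
      EuclideanSpace ℝ (Fin d))⟫
    + C

/-- The perturbed density `p̂_δ(x) = e^{−I(x,δ)} · p(x)`. -/
noncomputable def tiltedDensity (d m de : ℕ) (W : Matrix (Fin d) (Fin m) ℝ)
    (U : Matrix (Fin de) (Fin m) ℝ) (e : Fin de → ℝ)
    (δ : Matrix (Fin d) (Fin m) ℝ) (C : ℝ)
    (p : EuclideanSpace ℝ (Fin d) → ℝ) (x : EuclideanSpace ℝ (Fin d)) : ℝ :=
  Real.exp (-(tiltExp d m de W U e δ C x)) * p x


/-- The score-matching loss at `x`: `L(x; θ, p) = ‖s_θ(x) − ∇ log p(x)‖₂²`. -/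
noncomputable def smLoss (d m de : ℕ) (W : Matrix (Fin d) (Fin m) ℝ)
    (U : Matrix (Fin de) (Fin m) ℝ) (e : Fin de → ℝ)
    (θ : Matrix (Fin d) (Fin m) ℝ) (p : EuclideanSpace ℝ (Fin d) → ℝ)
    (x : EuclideanSpace ℝ (Fin d)) : ℝ :=
  ‖score d m de W U e θ x - gradient (fun y => Real.log (p y)) x‖ ^ 2

/-!
Taking logarithms, `log p̂_δ = log p − I(·, δ)`. Because `δWᵀ` is symmetric, the gradient of the
quadratic part of `I(·, δ)` is `(1/m)·δWᵀx`, so `∇ₓ I(x, δ) = (1/m)·δ(Wᵀx + Uᵀe) = s_δ(x)`. As the score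
model is linear in its parameter, `s_{θ+δ}(x) − ∇ log p(x) = s_θ(x) − (∇ log p(x) − s_δ(x))
= s_θ(x) − ∇ log p̂_δ(x)`.
-/

open Real

section Gradient

variable {F : Type*} [NormedAddCommGroup F] [InnerProductSpace ℝ F] [CompleteSpace F]
  {f g : F → ℝ} {f' g' x : F}

theorem HasGradientAt.add (hf : HasGradientAt f f' x) (hg : HasGradientAt g g' x) :
    HasGradientAt (fun y => f y + g y) (f' + g') x := by
  rw [hasGradientAt_iff_hasFDerivAt, map_add]
  exact hf.hasFDerivAt.add hg.hasFDerivAt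

theorem HasGradientAt.sub (hf : HasGradientAt f f' x) (hg : HasGradientAt g g' x) :
    HasGradientAt (fun y => f y - g y) (f' - g') x := by
  rw [hasGradientAt_iff_hasFDerivAt, map_sub]
  exact hf.hasFDerivAt.sub hg.hasFDerivAt

theorem HasGradientAt.const_mul (c : ℝ) (hf : HasGradientAt f f' x) :
    HasGradientAt (fun y => c * f y) (c • f') x := by
  rw [hasGradientAt_iff_hasFDerivAt, map_smul]
  exact hf.hasFDerivAt.const_mul c

theorem HasGradientAt.add_const (c : ℝ) (hf : HasGradientAt f f' x) :
    HasGradientAt (fun y => f y + c) f' x :=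
  hasGradientAt_iff_hasFDerivAt.mpr (hf.hasFDerivAt.add_const c)

theorem hasGradientAt_inner_const (v x : F) : HasGradientAt (fun y => ⟪y, v⟫) v x := by
  have h : (fun y => ⟪y, v⟫) = innerSL ℝ v := funext (real_inner_comm v)
  rw [hasGradientAt_iff_hasFDerivAt, h]
  exact (innerSL ℝ v).hasFDerivAt

theorem LinearMap.IsSymmetric.hasGradientAt_inner_self {T : F →L[ℝ] F}
    (hT : (T : F →ₗ[ℝ] F).IsSymmetric) (x : F) :
    HasGradientAt (fun y => ⟪y, T y⟫) (2 • T x) x := by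
  have h : (fun y => ⟪y, T y⟫) = T.reApplyInnerSelf := funext fun y => real_inner_comm _ _
  rw [hasGradientAt_iff_hasFDerivAt, h]
  refine (hT.hasStrictFDerivAt_reApplyInnerSelf x).hasFDerivAt.congr_fderiv ?_
  ext y
  simp [InnerProductSpace.toDual_apply_apply]

theorem HasGradientAt.log_exp_neg_mul (hg : ∀ y, g y ≠ 0) (hf : HasGradientAt f f' x)
    (hlog : HasGradientAt (fun y => log (g y)) g' x) :
    HasGradientAt (fun y => log (exp (-f y) * g y)) (g' - f') x := by
  convert hlog.sub hf using 2 with y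
  rw [log_mul (exp_ne_zero _) (hg y), log_exp]
  ring

end Gradient

section ScoreModel

variable {d m de : ℕ} (W : Matrix (Fin d) (Fin m) ℝ) (U : Matrix (Fin de) (Fin m) ℝ)
  (e : Fin de → ℝ)

theorem score_add (θ δ : Matrix (Fin d) (Fin m) ℝ) (x : EuclideanSpace ℝ (Fin d)) :
    score d m de W U e (θ + δ) x = score d m de W U e θ x + score d m de W U e δ x := by
  simp only [score, add_mulVec, ← smul_add]
  rfl

theorem tiltExp_eq_inner_toEuclideanCLM (δ : Matrix (Fin d) (Fin m) ℝ) (C : ℝ)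
    (y : EuclideanSpace ℝ (Fin d)) :
    tiltExp d m de W U e δ C y
      = (2 * (m : ℝ))⁻¹ * ⟪y, toEuclideanCLM (𝕜 := ℝ) (δ * Wᵀ) y⟫
        + (m : ℝ)⁻¹ * ⟪y, WithLp.toLp 2 (δ *ᵥ Uᵀ *ᵥ e)⟫ + C :=
  rfl

theorem hasGradientAt_tiltExp {δ : Matrix (Fin d) (Fin m) ℝ} (hsym : (δ * Wᵀ).IsSymm) (C : ℝ)
    (x : EuclideanSpace ℝ (Fin d)) :
    HasGradientAt (tiltExp d m de W U e δ C) (score d m de W U e δ x) x := by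
  have hT : (toEuclideanCLM (𝕜 := ℝ) (δ * Wᵀ) :
      EuclideanSpace ℝ (Fin d) →ₗ[ℝ] EuclideanSpace ℝ (Fin d)).IsSymmetric := by
    rw [coe_toEuclideanCLM_eq_toEuclideanLin, isSymmetric_toEuclideanLin_iff]
    exact isHermitian_iff_isSymm.mpr hsym
  have h := (((hT.hasGradientAt_inner_self x).const_mul (2 * (m : ℝ))⁻¹).add
    ((hasGradientAt_inner_const (WithLp.toLp 2 (δ *ᵥ Uᵀ *ᵥ e)) x).const_mul
      (m : ℝ)⁻¹)).add_const C
  rw [funext (tiltExp_eq_inner_toEuclideanCLM W U e δ C)]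
  convert h using 1
  rw [← Nat.cast_smul_eq_nsmul ℝ, smul_smul, show (2 * (m : ℝ))⁻¹ * (2 : ℕ) = (m : ℝ)⁻¹ by
    push_cast; ring, ← smul_add, score, mulVec_add, mulVec_mulVec]
  rfl

theorem gradient_log_tiltedDensity {p : EuclideanSpace ℝ (Fin d) → ℝ} (hp : ∀ y, 0 < p y)
    {x : EuclideanSpace ℝ (Fin d)} (hlogp : DifferentiableAt ℝ (fun y => log (p y)) x)
    {δ : Matrix (Fin d) (Fin m) ℝ} (hsym : (δ * Wᵀ).IsSymm) (C : ℝ) :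
    gradient (fun y => log (tiltedDensity d m de W U e δ C p y)) x
      = gradient (fun y => log (p y)) x - score d m de W U e δ x :=
  ((hasGradientAt_tiltExp W U e hsym C x).log_exp_neg_mul (fun y => (hp y).ne')
    hlogp.hasGradientAt).gradient

end ScoreModel

theorem perturbed_distribution_loss_equality_general (d m de : ℕ)
    (θ W : Matrix (Fin d) (Fin m) ℝ) (U : Matrix (Fin de) (Fin m) ℝ) (e : Fin de → ℝ)
    (p : EuclideanSpace ℝ (Fin d) → ℝ) (hp : ∀ y, 0 < p y)
    (x : EuclideanSpace ℝ (Fin d))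
    (hlogp : DifferentiableAt ℝ (fun y => Real.log (p y)) x)
    (δ : Matrix (Fin d) (Fin m) ℝ) (hsym : (δ * Wᵀ).IsSymm) (C : ℝ) :
    smLoss d m de W U e (θ + δ) p x
      = smLoss d m de W U e θ (tiltedDensity d m de W U e δ C p) x := by
  rw [smLoss, smLoss, score_add, gradient_log_tiltedDensity W U e hp hlogp hsym C,
    sub_sub_eq_add_sub]

/-- **Theorem 1: a perturbed distribution.** For a strictly positive density `p`
with `log ∘ p` differentiable at `x`, a perturbation `δ` with `δWᵀ` symmetric, and any constant
`C`, the perturbed density `p̂_δ = e^{−I(·,δ)}·p` satisfies the loss equality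
`L(x; θ+δ, p) = L(x; θ, p̂_δ)`. -/
theorem perturbed_distribution_loss_equality (d m de : ℕ) (hd : 0 < d) (hm : 0 < m)
    (hde : 0 < de)
    (θ W : Matrix (Fin d) (Fin m) ℝ) (U : Matrix (Fin de) (Fin m) ℝ) (e : Fin de → ℝ)
    (p : EuclideanSpace ℝ (Fin d) → ℝ) (hp : ∀ y, 0 < p y)
    (x : EuclideanSpace ℝ (Fin d))
    (hlogp : DifferentiableAt ℝ (fun y => Real.log (p y)) x)
    (δ : Matrix (Fin d) (Fin m) ℝ) (hsym : (δ * Wᵀ).IsSymm) (C : ℝ) :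
    smLoss d m de W U e (θ + δ) p x
      = smLoss d m de W U e θ (tiltedDensity d m de W U e δ C p) x :=
  perturbed_distribution_loss_equality_general d m de θ W U e p hp x hlogp δ hsym C
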